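/- Let (Ω, P) be a probability space, x : Ω → ℂ^N a random measurement, and L : ℂ^N × ℝ → ℝ an objective function such that for every measurement value the map θ ↦ L(x, θ) has a unique maximizer θ̂(x), is symmetric around θ̂(x), strictly increasing below it and strictly decreasing above it. Then for any fixed θ ∈ ℝ, E[(θ̂(x) - θ)²] = 2 ∫_{-∞}^{∞} |ε| · P(L(x, θ + 2ε) ≥ L(x, θ)) dε, provided θ̂(x) - θ has finite second moment. -/

import Mathlib

/-! Symmetry of `L(x, ·)` about `θ̂(x)` and monotonicity away from it turn the event
`L(x, θ + 2ε) ≥ L(x, θ)` into `ε ∈ [[0, θ̂(x) - θ]]`. Since `∫_{[[0, c]]} |ε| dε = c² / 2`, the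
identity is Tonelli's theorem for the indicator of `{(ω, ε) | ε ∈ [[0, θ̂(x ω) - θ]]}`. -/

open MeasureTheory Set

lemma integral_abs_uIcc_zero (c : ℝ) : ∫ ε in uIcc 0 c, |ε| = c ^ 2 / 2 := by
  rcases le_total 0 c with h | h
  · rw [uIcc_of_le h, integral_Icc_eq_integral_Ioc, ← intervalIntegral.integral_of_le h,
      intervalIntegral.integral_congr fun ε hε => abs_of_nonneg (uIcc_of_le h ▸ hε).1, integral_id]
    ring
  · rw [uIcc_of_ge h, integral_Icc_eq_integral_Ioc, ← intervalIntegral.integral_of_le h,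
      intervalIntegral.integral_congr fun ε hε => abs_of_nonpos (uIcc_of_le h ▸ hε).2,
      intervalIntegral.integral_neg, integral_id]
    ring

lemma lintegral_abs_uIcc_zero (c : ℝ) :
    ∫⁻ ε in uIcc 0 c, ENNReal.ofReal |ε| = ENNReal.ofReal (c ^ 2 / 2) := by
  rw [← ofReal_integral_eq_lintegral_ofReal continuous_abs.integrableOn_uIcc
    (ae_of_all _ fun _ => abs_nonneg _), integral_abs_uIcc_zero]

section

variable {Ω : Type*} [MeasurableSpace Ω] {μ : Measure Ω} {d : Ω → ℝ}

lemma measurableSet_setOf_snd_mem_uIcc (hd : Measurable d) :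
    MeasurableSet {p : Ω × ℝ | p.2 ∈ uIcc 0 (d p.1)} :=
  (measurableSet_le (measurable_const.min (hd.comp measurable_fst)) measurable_snd).inter
    (measurableSet_le measurable_snd (measurable_const.max (hd.comp measurable_fst)))

lemma measure_setOf_mem_uIcc_congr {d' : Ω → ℝ} (h : d =ᵐ[μ] d') (ε : ℝ) :
    μ {ω | ε ∈ uIcc 0 (d ω)} = μ {ω | ε ∈ uIcc 0 (d' ω)} :=
  measure_congr <| Filter.eventuallyEq_set.2 <| h.mono fun ω hω => by simp [hω]

lemma lintegral_abs_mul_measure_mem_uIcc [SFinite μ] (hd : Measurable d) :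
    ∫⁻ ε, ENNReal.ofReal |ε| * μ {ω | ε ∈ uIcc 0 (d ω)}
      = ∫⁻ ω, ENNReal.ofReal (d ω ^ 2 / 2) ∂μ := by
  set T := {p : Ω × ℝ | p.2 ∈ uIcc 0 (d p.1)}
  have hT : MeasurableSet T := measurableSet_setOf_snd_mem_uIcc hd
  have hF : Measurable (T.indicator fun p => ENNReal.ofReal |p.2|) :=
    (ENNReal.measurable_ofReal.comp measurable_snd.abs).indicator hT
  calc ∫⁻ ε, ENNReal.ofReal |ε| * μ {ω | ε ∈ uIcc 0 (d ω)}
      = ∫⁻ ε, ∫⁻ ω, T.indicator (fun p => ENNReal.ofReal |p.2|) (ω, ε) ∂μ :=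
        lintegral_congr fun ε =>
          (lintegral_indicator_const (hT.preimage measurable_prodMk_right) _).symm
    _ = ∫⁻ ω, (∫⁻ ε, T.indicator (fun p => ENNReal.ofReal |p.2|) (ω, ε)) ∂μ :=
        lintegral_lintegral_swap (hF.comp measurable_swap).aemeasurable
    _ = ∫⁻ ω, ENNReal.ofReal (d ω ^ 2 / 2) ∂μ := by
        refine lintegral_congr fun ω => ?_
        rw [← lintegral_abs_uIcc_zero, ← lintegral_indicator measurableSet_uIcc]
        rfl

/-- Without square-integrability both sides are the junk value `0`. -/
theorem integral_sq_eq_two_mul_integral_abs_mul_measure_mem_uIcc [IsFiniteMeasure μ]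
    (hd : AEMeasurable d μ) :
    ∫ ω, d ω ^ 2 ∂μ = 2 * ∫ ε, |ε| * (μ {ω | ε ∈ uIcc 0 (d ω)}).toReal := by
  suffices h : ∀ d : Ω → ℝ, Measurable d →
      ∫ ω, d ω ^ 2 ∂μ = 2 * ∫ ε, |ε| * (μ {ω | ε ∈ uIcc 0 (d ω)}).toReal by
    have hmk : ∫ ω, d ω ^ 2 ∂μ = ∫ ω, hd.mk d ω ^ 2 ∂μ :=
      integral_congr_ae <| hd.ae_eq_mk.mono fun ω hω => by simp only [hω]
    simpa only [hmk, measure_setOf_mem_uIcc_congr hd.ae_eq_mk] using h _ hd.measurable_mk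
  intro d hd
  have hmeas : Measurable fun ε => |ε| * (μ {ω | ε ∈ uIcc 0 (d ω)}).toReal :=
    measurable_id.abs.mul
      (measurable_measure_prodMk_right (measurableSet_setOf_snd_mem_uIcc hd)).ennreal_toReal
  have hsq : ∫ ω, d ω ^ 2 / 2 ∂μ = (∫⁻ ω, ENNReal.ofReal (d ω ^ 2 / 2) ∂μ).toReal :=
    integral_eq_lintegral_of_nonneg_ae (ae_of_all _ fun _ => by positivity)
      ((hd.pow_const 2).div_const 2).aestronglyMeasurable
  have hlayer : ∫ ε, |ε| * (μ {ω | ε ∈ uIcc 0 (d ω)}).toReal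
      = (∫⁻ ε, ENNReal.ofReal |ε| * μ {ω | ε ∈ uIcc 0 (d ω)}).toReal := by
    rw [integral_eq_lintegral_of_nonneg_ae
      (ae_of_all _ fun ε => mul_nonneg (abs_nonneg ε) ENNReal.toReal_nonneg)
      hmeas.aestronglyMeasurable]
    congr 1
    refine lintegral_congr fun ε => ?_
    rw [ENNReal.ofReal_mul (abs_nonneg ε), ENNReal.ofReal_toReal (measure_ne_top _ _)]
  rw [hlayer, lintegral_abs_mul_measure_mem_uIcc hd, ← hsq, integral_div]
  ring

end

lemma abs_two_mul_sub_le_abs_iff_mem_uIcc (u ε : ℝ) : |2 * ε - u| ≤ |u| ↔ ε ∈ uIcc 0 u := by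
  rw [abs_le, mem_uIcc]
  grind

section

variable {f : ℝ → ℝ} {c : ℝ}

lemma eq_apply_add_abs_sub_of_symm (hsym : ∀ h, f (c + h) = f (c - h)) (t : ℝ) :
    f t = f (c + |t - c|) := by
  rcases le_total c t with h | h
  · rw [abs_of_nonneg (sub_nonneg.2 h), add_sub_cancel]
  · rw [abs_of_nonpos (sub_nonpos.2 h), hsym, sub_neg_eq_add, add_sub_cancel]

lemma le_iff_abs_sub_le_of_symm (hsym : ∀ h, f (c + h) = f (c - h))
    (hdec : StrictAntiOn f (Ici c)) (a b : ℝ) : f a ≤ f b ↔ |b - c| ≤ |a - c| := by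
  rw [eq_apply_add_abs_sub_of_symm hsym a, eq_apply_add_abs_sub_of_symm hsym b,
    hdec.le_iff_ge (mem_Ici.2 (le_add_of_nonneg_right (abs_nonneg _)))
      (mem_Ici.2 (le_add_of_nonneg_right (abs_nonneg _))),
    add_le_add_iff_left]

lemma le_apply_add_two_mul_iff_mem_uIcc (hsym : ∀ h, f (c + h) = f (c - h))
    (hdec : StrictAntiOn f (Ici c)) (θ ε : ℝ) : f θ ≤ f (θ + 2 * ε) ↔ ε ∈ uIcc 0 (c - θ) := by
  rw [le_iff_abs_sub_le_of_symm hsym hdec, ← abs_two_mul_sub_le_abs_iff_mem_uIcc,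
    ← abs_neg (θ - c)]
  ring_nf

end

theorem stmt_4_general {Ω : Type*} [MeasurableSpace Ω] (μ : Measure Ω) [IsProbabilityMeasure μ]
    (N : ℕ) (x : Ω → (Fin N → ℂ))
    (L : (Fin N → ℂ) → ℝ → ℝ) (θhat : (Fin N → ℂ) → ℝ)
    (hsym : ∀ m (h : ℝ), L m (θhat m + h) = L m (θhat m - h))
    (hdec : ∀ m, StrictAntiOn (L m) (Set.Ici (θhat m)))
    (θ : ℝ) (hL2 : MemLp (fun ω => θhat (x ω) - θ) 2 μ) :
    ∫ ω, (θhat (x ω) - θ) ^ 2 ∂μ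
      = 2 * ∫ ε : ℝ, |ε| * (μ {ω | L (x ω) θ ≤ L (x ω) (θ + 2 * ε)}).toReal := by
  have hevent : ∀ ε : ℝ, {ω | L (x ω) θ ≤ L (x ω) (θ + 2 * ε)}
      = {ω | ε ∈ uIcc 0 (θhat (x ω) - θ)} := fun ε =>
    Set.ext fun ω => le_apply_add_two_mul_iff_mem_uIcc (hsym (x ω)) (hdec (x ω)) θ ε
  simp only [hevent]
  exact integral_sq_eq_two_mul_integral_abs_mul_measure_mem_uIcc
    hL2.aestronglyMeasurable.aemeasurable

/-- For an implicitly defined estimator `θhat (x ω)` whose objective function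
`L (x ω) ·` has, for every measurement value, a unique maximizer around which it is
symmetric, strictly increasing below and strictly decreasing above, the MSE at any fixed
`θ` equals `2 ∫ |ε| P(L(x, θ+2ε) ≥ L(x, θ)) dε`, provided finite second moment. -/
theorem stmt_4 {Ω : Type*} [MeasurableSpace Ω] (μ : Measure Ω) [IsProbabilityMeasure μ]
    (N : ℕ) (x : Ω → (Fin N → ℂ)) (hx : Measurable x)
    (L : (Fin N → ℂ) → ℝ → ℝ) (θhat : (Fin N → ℂ) → ℝ)
    (hmax : ∀ m t, t ≠ θhat m → L m t < L m (θhat m))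
    (hsym : ∀ m (h : ℝ), L m (θhat m + h) = L m (θhat m - h))
    (hinc : ∀ m, StrictMonoOn (L m) (Set.Iic (θhat m)))
    (hdec : ∀ m, StrictAntiOn (L m) (Set.Ici (θhat m)))
    (θ : ℝ) (hL2 : MemLp (fun ω => θhat (x ω) - θ) 2 μ) :
    ∫ ω, (θhat (x ω) - θ) ^ 2 ∂μ
      = 2 * ∫ ε : ℝ, |ε| * (μ {ω | L (x ω) θ ≤ L (x ω) (θ + 2 * ε)}).toReal :=
  stmt_4_general μ N x L θhat hsym hdec θ hL2
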